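/- arXiv:math/0611200 — 8 statements merged into one kernel-verified Lean document; each statement's English description precedes it below -/
import Mathlib

section
/- Let A be an associative algebra and define on A the bracket [x,y] = xy − yx, making A a Lie algebra. If r : ℂ × ℂ → End(A) satisfies the associative Yang-Baxter equation (r(u,w)x)(r(u,v)y) − r(u,v)((r(v,w)x)y) − r(u,w)(x(r(w,v)y)) = 0 for all u,v,w ∈ ℂ and x,y ∈ A, then r also satisfies the classical (Lie) Yang-Baxter equation [r(u,w)x, r(u,v)y] − r(u,v)[r(v,w)x, y] − r(u,w)[x, r(w,v)y] = 0 for all u,v,w and x,y. -/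
/-! The classical Yang–Baxter expression at `(u, v, w, x, y)` is the difference of the
associative one at `(u, v, w, x, y)` and at `(u, w, v, y, x)`. -/

theorem lieYangBaxter_eq_assocYangBaxter_sub_assocYangBaxter {ι A F : Type*} [NonUnitalRing A]
    [FunLike F A A] [AddMonoidHomClass F A A] (r : ι → ι → F) (u v w : ι) (x y : A) :
    (r u w x * r u v y - r u v y * r u w x)
        - r u v (r v w x * y - y * r v w x)
        - r u w (x * r w v y - r w v y * x)
      = (r u w x * r u v y - r u v (r v w x * y) - r u w (x * r w v y))
        - (r u v y * r u w x - r u w (r w v y * x) - r u v (y * r v w x)) := by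
  simp only [map_sub]
  abel

/-- A solution of the associative Yang–Baxter equation is a solution of the
classical (Lie) Yang–Baxter equation for the commutator bracket `[x,y] = xy - yx`. -/
theorem stmt2 {A : Type*} [NonUnitalRing A] [Module ℂ A]
    (r : ℂ → ℂ → A →ₗ[ℂ] A)
    (h : ∀ (u v w : ℂ) (x y : A),
      r u w x * r u v y - r u v (r v w x * y) - r u w (x * r w v y) = 0) :
    ∀ (u v w : ℂ) (x y : A),
      (r u w x * r u v y - r u v y * r u w x)
        - r u v (r v w x * y - y * r v w x)
        - r u w (x * r w v y - r w v y * x) = 0 := by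
  intro u v w x y
  rw [lieYangBaxter_eq_assocYangBaxter_sub_assocYangBaxter, h u v w x y, h u w v y x, sub_zero]
end

section
/- Let A = ℂ^p with coordinatewise multiplication and idempotent basis e_1, ..., e_p (so e_i e_j = δ_{ij} e_i). Let φ_1, ..., φ_p, ψ_1, ..., ψ_p : ℂ → ℂ be functions with φ_1, ..., φ_p nonconstant. Then the operator r(u,v) defined by r(u,v)e_i = Σ_{j=1}^p (ψ_i(v)/(φ_j(u) − φ_i(v))) e_j satisfies the associative Yang-Baxter equation (r(u,w)x)(r(u,v)y) − r(u,v)((r(v,w)x)y) − r(u,w)(x(r(w,v)y)) = 0, for all u,v,w in ℂ where the expression is defined (i.e. no denominator vanishes). -/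
/-! On `ℂ^p` the equation is linear in `x` and `y`, so it suffices that the coefficient of
`x i * y k` in coordinate `j` vanishes. With `a = φ j u`, `b = φ k v`, `c = φ i w` that
coefficient is `ψ i w * ψ k v` times the scalar identity `inv_sub_mul_inv_sub_eq_add`, the
associative Yang–Baxter equation for the Cauchy kernel `1 / (a - b)`. -/

open Finset

/-- The operator `r(u,v)` on `ℂ^p` with `r(u,v)e_i = Σ_j (ψ_i(v)/(φ_j(u) − φ_i(v))) e_j`,
written in coordinates. -/
noncomputable def rop3 {p : ℕ} (φ ψ : Fin p → ℂ → ℂ) (a b : ℂ)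
    (x : Fin p → ℂ) : Fin p → ℂ :=
  fun j => ∑ i, ψ i b / (φ j a - φ i b) * x i

theorem inv_sub_mul_inv_sub_eq_add {K : Type*} [Field K] {a b c : K}
    (hab : a ≠ b) (hac : a ≠ c) (hbc : b ≠ c) :
    (a - c)⁻¹ * (a - b)⁻¹ = (a - b)⁻¹ * (b - c)⁻¹ + (a - c)⁻¹ * (c - b)⁻¹ := by
  have hab' := sub_ne_zero_of_ne hab
  have hac' := sub_ne_zero_of_ne hac
  have hbc' := sub_ne_zero_of_ne hbc
  have hcb' := sub_ne_zero_of_ne hbc.symm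
  field_simp
  ring

section Coefficients

variable {p : ℕ} (φ ψ : Fin p → ℂ → ℂ) (a b c : ℂ) (x y : Fin p → ℂ) (j : Fin p)

theorem rop3_mul_rop3_apply :
    (rop3 φ ψ a c x * rop3 φ ψ a b y) j =
      ∑ i, ∑ k, ψ i c * ψ k b * x i * y k * ((φ j a - φ i c)⁻¹ * (φ j a - φ k b)⁻¹) := by
  simp only [rop3, Pi.mul_apply, Fintype.sum_mul_sum]
  refine sum_congr rfl fun i _ => sum_congr rfl fun k _ => ?_
  ring

theorem rop3_apply_rop3_mul :
    rop3 φ ψ a b (rop3 φ ψ b c x * y) j =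
      ∑ i, ∑ k, ψ i c * ψ k b * x i * y k * ((φ j a - φ k b)⁻¹ * (φ k b - φ i c)⁻¹) := by
  simp only [rop3, Pi.mul_apply, sum_mul, mul_sum]
  rw [sum_comm]
  refine sum_congr rfl fun i _ => sum_congr rfl fun k _ => ?_
  ring

theorem rop3_apply_mul_rop3 :
    rop3 φ ψ a c (x * rop3 φ ψ c b y) j =
      ∑ i, ∑ k, ψ i c * ψ k b * x i * y k * ((φ j a - φ i c)⁻¹ * (φ i c - φ k b)⁻¹) := by
  simp only [rop3, Pi.mul_apply, mul_sum]
  refine sum_congr rfl fun i _ => sum_congr rfl fun k _ => ?_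
  ring

end Coefficients

theorem stmt3_general {p : ℕ} (φ ψ : Fin p → ℂ → ℂ)
    (u v w : ℂ)
    (h1 : ∀ i j, φ j u ≠ φ i v) (h2 : ∀ i j, φ j v ≠ φ i w)
    (h3 : ∀ i j, φ j u ≠ φ i w) :
    ∀ x y : Fin p → ℂ,
      rop3 φ ψ u w x * rop3 φ ψ u v y
        - rop3 φ ψ u v (rop3 φ ψ v w x * y)
        - rop3 φ ψ u w (x * rop3 φ ψ w v y) = 0 := by
  intro x y
  funext j
  simp only [Pi.sub_apply, Pi.zero_apply, rop3_mul_rop3_apply, rop3_apply_rop3_mul,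
    rop3_apply_mul_rop3, ← sum_sub_distrib, ← mul_sub]
  refine sum_eq_zero fun i _ => sum_eq_zero fun k _ => ?_
  rw [inv_sub_mul_inv_sub_eq_add (h1 k j) (h3 i j) (h2 i k), sub_sub, sub_self, mul_zero]

/-- The operator `rop3` satisfies the associative Yang–Baxter equation on `A = ℂ^p`
at all parameter triples where no denominator vanishes. -/
theorem stmt3 {p : ℕ} (φ ψ : Fin p → ℂ → ℂ)
    (hφ : ∀ i, ∃ a b, φ i a ≠ φ i b)
    (u v w : ℂ)
    (h1 : ∀ i j, φ j u ≠ φ i v) (h2 : ∀ i j, φ j v ≠ φ i w)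
    (h3 : ∀ i j, φ j u ≠ φ i w) (h4 : ∀ i j, φ j w ≠ φ i v) :
    ∀ x y : Fin p → ℂ,
      rop3 φ ψ u w x * rop3 φ ψ u v y
        - rop3 φ ψ u v (rop3 φ ψ v w x * y)
        - rop3 φ ψ u w (x * rop3 φ ψ w v y) = 0 :=
  stmt3_general φ ψ u v w h1 h2 h3
end

section
/- Let 𝔤 be a Lie algebra with two compatible brackets [·,·] and [·,·]₁, i.e. [·,·] + λ[·,·]₁ is a Lie bracket for all λ. Suppose S : ℂ → End(𝔤) is a function defined on a set U ⊆ ℂ, with each S_λ invertible, satisfying [S_λ(x), S_λ(y)] = S_λ([x,y] + λ[x,y]₁) for all x,y ∈ 𝔤 and λ ∈ U. Then r(u,v) = (1/(u−v)) S_u ∘ S_v^{-1} satisfies the classical Yang-Baxter equation [r(u,w)x, r(u,v)y] − r(u,v)[r(v,w)x, y] − r(u,w)[x, r(w,v)y] = 0 for all distinct u,v,w ∈ U and x,y ∈ 𝔤. -/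
/-!
Writing `x = S_w p` and `y = S_v q`, the intertwining identity turns each of the three terms of the
Yang–Baxter expression into a scalar multiple of `S_u ([p, q] + c B(p, q))` with `c = u, v, w`
respectively. The expression therefore vanishes because the cyclic sums over `u, v, w` of
`1/((u-v)(u-w))` and of `u/((u-v)(u-w))` are both zero.
-/

theorem symm_lie_map_eq_of_intertwining {K L : Type*} [CommRing K] [LieRing L] [LieAlgebra K L]
    {B : L →ₗ[K] L →ₗ[K] L} {S : L ≃ₗ[K] L} {c : K}
    (hS : ∀ x y : L, ⁅S x, S y⁆ = S (⁅x, y⁆ + c • B x y)) (p q : L) :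
    S.symm ⁅S p, S q⁆ = ⁅p, q⁆ + c • B p q := by
  rw [hS, LinearEquiv.symm_apply_apply]

theorem classicalYangBaxter_coefficients {K M : Type*} [Field K] [AddCommGroup M] [Module K M]
    {u v w : K} (huv : u ≠ v) (huw : u ≠ w) (hvw : v ≠ w) (X Y : M) :
    ((u - v)⁻¹ * (u - w)⁻¹) • (X + u • Y) - ((u - v)⁻¹ * (v - w)⁻¹) • (X + v • Y)
      - ((u - w)⁻¹ * (w - v)⁻¹) • (X + w • Y) = 0 := by
  have huv' : u - v ≠ 0 := sub_ne_zero.mpr huv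
  have huw' : u - w ≠ 0 := sub_ne_zero.mpr huw
  have hvw' : v - w ≠ 0 := sub_ne_zero.mpr hvw
  have hwv' : w - v ≠ 0 := sub_ne_zero.mpr hvw.symm
  match_scalars <;> field_simp <;> ring

theorem stmt4_general {L : Type*} [LieRing L] [LieAlgebra ℂ L]
    (B : L →ₗ[ℂ] L →ₗ[ℂ] L)
    (U : Set ℂ) (S : ℂ → (L ≃ₗ[ℂ] L))
    (hS : ∀ lam ∈ U, ∀ x y : L, ⁅S lam x, S lam y⁆ = S lam (⁅x, y⁆ + lam • B x y)) :
    ∀ u ∈ U, ∀ v ∈ U, ∀ w ∈ U, u ≠ v → u ≠ w → v ≠ w →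
      ∀ r : ℂ → ℂ → L → L,
        (∀ a b z, r a b z = (a - b)⁻¹ • S a ((S b).symm z)) →
        ∀ x y : L,
          ⁅r u w x, r u v y⁆ - r u v ⁅r v w x, y⁆ - r u w ⁅x, r w v y⁆ = 0 := by
  intro u hu v hv w hw huv huw hvw r hr x y
  obtain ⟨p, rfl⟩ := (S w).surjective x
  obtain ⟨q, rfl⟩ := (S v).surjective y
  have h₁ : ⁅r u w (S w p), r u v (S v q)⁆
      = ((u - v)⁻¹ * (u - w)⁻¹) • S u (⁅p, q⁆ + u • B p q) := by
    simp only [hr, LinearEquiv.symm_apply_apply, smul_lie, lie_smul, hS u hu, smul_smul]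
  have h₂ : r u v ⁅r v w (S w p), S v q⁆
      = ((u - v)⁻¹ * (v - w)⁻¹) • S u (⁅p, q⁆ + v • B p q) := by
    simp only [hr, LinearEquiv.symm_apply_apply, smul_lie, map_smul,
      symm_lie_map_eq_of_intertwining (hS v hv), smul_smul]
  have h₃ : r u w ⁅S w p, r w v (S v q)⁆
      = ((u - w)⁻¹ * (w - v)⁻¹) • S u (⁅p, q⁆ + w • B p q) := by
    simp only [hr, LinearEquiv.symm_apply_apply, lie_smul, map_smul,
      symm_lie_map_eq_of_intertwining (hS w hw), smul_smul]
  rw [h₁, h₂, h₃]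
  simpa only [map_sub, map_smul, map_zero] using
    congrArg (S u) (classicalYangBaxter_coefficients huv huw hvw ⁅p, q⁆ (B p q))

/-- Given compatible Lie brackets `⁅·,·⁆` and `B` with intertwining operators `S_λ`
(`[S_λ x, S_λ y] = S_λ([x,y] + λ B x y)` for `λ ∈ U`, each `S_λ` invertible),
the operator `r(u,v) = (u−v)⁻¹ S_u S_v⁻¹` satisfies the classical Yang–Baxter equation. -/
theorem stmt4 {L : Type*} [LieRing L] [LieAlgebra ℂ L]
    (B : L →ₗ[ℂ] L →ₗ[ℂ] L)
    (hBalt : ∀ x, B x x = 0)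
    (hcompat : ∀ (lam : ℂ) (C : L → L → L),
      (∀ x y, C x y = ⁅x, y⁆ + lam • B x y) →
      ∀ x y z, C (C x y) z + C (C y z) x + C (C z x) y = 0)
    (U : Set ℂ) (S : ℂ → (L ≃ₗ[ℂ] L))
    (hS : ∀ lam ∈ U, ∀ x y : L, ⁅S lam x, S lam y⁆ = S lam (⁅x, y⁆ + lam • B x y)) :
    ∀ u ∈ U, ∀ v ∈ U, ∀ w ∈ U, u ≠ v → u ≠ w → v ≠ w →
      ∀ r : ℂ → ℂ → L → L,
        (∀ a b z, r a b z = (a - b)⁻¹ • S a ((S b).symm z)) →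
        ∀ x y : L,
          ⁅r u w x, r u v y⁆ - r u v ⁅r v w x, y⁆ - r u w ⁅x, r w v y⁆ = 0 :=
  stmt4_general B U S hS
end

section
/- Let A be an associative algebra with two compatible associative products x·y and x∘y. Suppose S : U → End(A) (U ⊆ ℂ) with each S_λ invertible and satisfying S_λ(x)·S_λ(y) = S_λ(x·y + λ x∘y) for all x,y ∈ A, λ ∈ U. Then r(u,v) = (1/(u−v)) S_u ∘ S_v^{-1} satisfies the associative Yang-Baxter equation (r(u,w)x)·(r(u,v)y) − r(u,v)((r(v,w)x)·y) − r(u,w)(x·(r(w,v)y)) = 0 for all distinct u,v,w ∈ U and x,y ∈ A. -/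
/-!
Write `x = S_w x'` and `y = S_v y'`. The intertwining identity at `u`, `v` and `w` respectively
turns the three terms of the equation, with their signs, into `S_u (c_λ • (x' * y' + λ • m x' y'))`
for `λ = u, v, w`, where `c_λ = 1 / ∏_{μ ≠ λ} (λ - μ)` are the Lagrange interpolation weights of
the nodes `u, v, w`. These weights annihilate every polynomial of degree at most one in `λ`,
so the sum vanishes.
-/

section PartialFractions

variable {K M : Type*} [AddCommGroup M]

theorem smul_add_smul_add_smul_eq_zero [Ring K] [Module K M] {α β γ a b c : K}
    (h₀ : α + β + γ = 0) (h₁ : α * a + β * b + γ * c = 0) (p q : M) :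
    α • (p + a • q) + β • (p + b • q) + γ • (p + c • q) = 0 := by
  have hsplit : α • (p + a • q) + β • (p + b • q) + γ • (p + c • q)
      = (α + β + γ) • p + (α * a + β * b + γ * c) • q := by
    simp only [smul_add, smul_smul, add_smul]
    abel
  rw [hsplit, h₀, h₁, zero_smul, zero_smul, add_zero]

theorem inv_sub_mul_inv_sub_smul_combination_eq_zero [Field K] [Module K M] {u v w : K}
    (huv : u ≠ v) (huw : u ≠ w) (hvw : v ≠ w) (p q : M) :
    ((u - w)⁻¹ * (u - v)⁻¹) • (p + u • q) - ((u - v)⁻¹ * (v - w)⁻¹) • (p + v • q)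
      - ((u - w)⁻¹ * (w - v)⁻¹) • (p + w • q) = 0 := by
  have huv' : u - v ≠ 0 := sub_ne_zero.2 huv
  have huw' : u - w ≠ 0 := sub_ne_zero.2 huw
  have hvw' : v - w ≠ 0 := sub_ne_zero.2 hvw
  rw [sub_eq_add_neg, sub_eq_add_neg, ← neg_smul, ← neg_smul]
  apply smul_add_smul_add_smul_eq_zero
  · field_simp
    ring
  · field_simp
    ring

end PartialFractions

section YangBaxter

variable {K A : Type*} [Field K] [Ring A] [Algebra K A] (S : K → A ≃ₗ[K] A)

def yangBaxterOperator (a b : K) (z : A) : A := (a - b)⁻¹ • S a ((S b).symm z)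

variable {S} {m : A → A → A}

theorem yangBaxterOperator_mul_yangBaxterOperator {u v w : K}
    (hu : ∀ x y, S u x * S u y = S u (x * y + u • m x y)) (x y : A) :
    yangBaxterOperator S u w (S w x) * yangBaxterOperator S u v (S v y)
      = ((u - w)⁻¹ * (u - v)⁻¹) • S u (x * y + u • m x y) := by
  simp only [yangBaxterOperator, LinearEquiv.symm_apply_apply, smul_mul_smul_comm, hu]

theorem yangBaxterOperator_of_yangBaxterOperator_mul {u v w : K}
    (hv : ∀ x y, S v x * S v y = S v (x * y + v • m x y)) (x y : A) :
    yangBaxterOperator S u v (yangBaxterOperator S v w (S w x) * S v y)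
      = ((u - v)⁻¹ * (v - w)⁻¹) • S u (x * y + v • m x y) := by
  simp only [yangBaxterOperator, LinearEquiv.symm_apply_apply, smul_mul_assoc, hv, map_smul,
    smul_smul]

theorem yangBaxterOperator_of_mul_yangBaxterOperator {u v w : K}
    (hw : ∀ x y, S w x * S w y = S w (x * y + w • m x y)) (x y : A) :
    yangBaxterOperator S u w (S w x * yangBaxterOperator S w v (S v y))
      = ((u - w)⁻¹ * (w - v)⁻¹) • S u (x * y + w • m x y) := by
  simp only [yangBaxterOperator, LinearEquiv.symm_apply_apply, mul_smul_comm, hw, map_smul,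
    smul_smul]

theorem associativeYangBaxter_yangBaxterOperator {u v w : K}
    (hu : ∀ x y, S u x * S u y = S u (x * y + u • m x y))
    (hv : ∀ x y, S v x * S v y = S v (x * y + v • m x y))
    (hw : ∀ x y, S w x * S w y = S w (x * y + w • m x y))
    (huv : u ≠ v) (huw : u ≠ w) (hvw : v ≠ w) (x y : A) :
    yangBaxterOperator S u w x * yangBaxterOperator S u v y
      - yangBaxterOperator S u v (yangBaxterOperator S v w x * y)
      - yangBaxterOperator S u w (x * yangBaxterOperator S w v y) = 0 := by
  obtain ⟨x, rfl⟩ := (S w).surjective x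
  obtain ⟨y, rfl⟩ := (S v).surjective y
  rw [yangBaxterOperator_mul_yangBaxterOperator hu,
    yangBaxterOperator_of_yangBaxterOperator_mul hv,
    yangBaxterOperator_of_mul_yangBaxterOperator hw,
    ← map_smul, ← map_smul, ← map_smul, ← map_sub, ← map_sub, inv_sub_mul_inv_sub_smul_combination_eq_zero huv huw hvw, map_zero]

end YangBaxter

theorem stmt5_general {A : Type*} [Ring A] [Algebra ℂ A]
    (m : A →ₗ[ℂ] A →ₗ[ℂ] A)
    (U : Set ℂ) (S : ℂ → (A ≃ₗ[ℂ] A))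
    (hS : ∀ lam ∈ U, ∀ x y : A, S lam x * S lam y = S lam (x * y + lam • m x y)) :
    ∀ u ∈ U, ∀ v ∈ U, ∀ w ∈ U, u ≠ v → u ≠ w → v ≠ w →
      ∀ r : ℂ → ℂ → A → A,
        (∀ a b z, r a b z = (a - b)⁻¹ • S a ((S b).symm z)) →
        ∀ x y : A,
          r u w x * r u v y - r u v (r v w x * y) - r u w (x * r w v y) = 0 := by
  intro u hu v hv w hw huv huw hvw r hr x y
  obtain rfl : r = yangBaxterOperator S := by
    funext a b z
    exact hr a b z
  exact associativeYangBaxter_yangBaxterOperator (hS u hu) (hS v hv) (hS w hw) huv huw hvw x y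

/-- Given compatible associative products `·` and `m` with intertwining operators `S_λ`
(`S_λ x · S_λ y = S_λ(x·y + λ m x y)` for `λ ∈ U`, each `S_λ` invertible),
the operator `r(u,v) = (u−v)⁻¹ S_u S_v⁻¹` satisfies the associative Yang–Baxter equation. -/
theorem stmt5 {A : Type*} [Ring A] [Algebra ℂ A]
    (m : A →ₗ[ℂ] A →ₗ[ℂ] A)
    (hcompat : ∀ (lam : ℂ) (P : A → A → A),
      (∀ x y, P x y = x * y + lam • m x y) →
      ∀ x y z, P (P x y) z = P x (P y z))
    (U : Set ℂ) (S : ℂ → (A ≃ₗ[ℂ] A))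
    (hS : ∀ lam ∈ U, ∀ x y : A, S lam x * S lam y = S lam (x * y + lam • m x y)) :
    ∀ u ∈ U, ∀ v ∈ U, ∀ w ∈ U, u ≠ v → u ≠ w → v ≠ w →
      ∀ r : ℂ → ℂ → A → A,
        (∀ a b z, r a b z = (a - b)⁻¹ • S a ((S b).symm z)) →
        ∀ x y : A,
          r u w x * r u v y - r u v (r v w x * y) - r u w (x * r w v y) = 0 :=
  stmt5_general m U S hS
end

section
/- Let A = Mat_N(ℂ) and let a ∈ A. For u,v,w ∈ ℂ pairwise distinct and such that u+a, v+a, w+a are invertible, the operator r(u,v) ∈ End(A) defined by r(u,v)x = (1/(u−v))x + (v+a)^{-1}x satisfies the associative Yang-Baxter equation (r(u,w)x)(r(u,v)y) − r(u,v)((r(v,w)x)y) − r(u,w)(x(r(w,v)y)) = 0 for all x,y ∈ A. -/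
/-!
Since `r(u,v)` is left multiplication by the matrix `R(u,v) = (u-v)⁻¹ + (v+a)⁻¹`, and
`R(u,v) - R(w,v)` is the scalar `c = (u-v)⁻¹ - (w-v)⁻¹`, the equation reduces to the matrix
identity `R(u,v) R(v,w) = c R(u,w)`. This follows from the resolvent identity
`(v+a)⁻¹ (w+a)⁻¹ = ((v+a)⁻¹ - (w+a)⁻¹) / (w-v)`.
-/

namespace Matrix

variable {n K : Type*} [Fintype n] [DecidableEq n] [Field K]

theorem inv_smul_one_add_sub_inv_smul_one_add (a : Matrix n n K) {v w : K}
    (h : IsUnit (v • (1 : Matrix n n K) + a) ↔ IsUnit (w • (1 : Matrix n n K) + a)) :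
    (v • (1 : Matrix n n K) + a)⁻¹ - (w • 1 + a)⁻¹
      = (w - v) • ((v • (1 : Matrix n n K) + a)⁻¹ * (w • 1 + a)⁻¹) := by
  rw [inv_sub_inv h, add_sub_add_right_eq_sub, ← sub_smul, mul_smul_comm, mul_one, smul_mul_assoc]

noncomputable def yangBaxterR (a : Matrix n n K) (u v : K) : Matrix n n K :=
  (u - v)⁻¹ • 1 + (v • 1 + a)⁻¹

theorem yangBaxterR_sub_yangBaxterR (a : Matrix n n K) (u v w : K) :
    yangBaxterR a u v - yangBaxterR a w v = ((u - v)⁻¹ - (w - v)⁻¹) • 1 := by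
  rw [yangBaxterR, yangBaxterR, add_sub_add_right_eq_sub, sub_smul]

theorem yangBaxterR_mul_yangBaxterR (a : Matrix n n K) {u v w : K}
    (huv : u ≠ v) (huw : u ≠ w) (hvw : v ≠ w)
    (hv : IsUnit (v • (1 : Matrix n n K) + a)) (hw : IsUnit (w • (1 : Matrix n n K) + a)) :
    yangBaxterR a u v * yangBaxterR a v w
      = ((u - v)⁻¹ - (w - v)⁻¹) • yangBaxterR a u w := by
  have hwv' : w - v ≠ 0 := sub_ne_zero.mpr hvw.symm
  have resolvent : (v • (1 : Matrix n n K) + a)⁻¹ * (w • 1 + a)⁻¹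
      = (w - v)⁻¹ • ((v • (1 : Matrix n n K) + a)⁻¹ - (w • 1 + a)⁻¹) := by
    rw [inv_smul_one_add_sub_inv_smul_one_add a (iff_of_true hv hw), smul_smul,
      inv_mul_cancel₀ hwv', one_smul]
  simp only [yangBaxterR, add_mul, mul_add, smul_mul_assoc, mul_smul_comm, one_mul, mul_one,
    resolvent, smul_add, smul_sub, smul_smul]
  have huv' : u - v ≠ 0 := sub_ne_zero.mpr huv
  have huw' : u - w ≠ 0 := sub_ne_zero.mpr huw
  have hvw' : v - w ≠ 0 := sub_ne_zero.mpr hvw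
  match_scalars <;> field_simp <;> ring

end Matrix

theorem stmt9_general {N : ℕ} (a : Matrix (Fin N) (Fin N) ℂ) (u v w : ℂ)
    (huv : u ≠ v) (huw : u ≠ w) (hvw : v ≠ w)
    (hv : IsUnit (v • (1 : Matrix (Fin N) (Fin N) ℂ) + a))
    (hw : IsUnit (w • (1 : Matrix (Fin N) (Fin N) ℂ) + a)) :
    ∀ r : ℂ → ℂ → Matrix (Fin N) (Fin N) ℂ → Matrix (Fin N) (Fin N) ℂ,
      (∀ b c x, r b c x = (b - c)⁻¹ • x + (c • (1 : Matrix (Fin N) (Fin N) ℂ) + a)⁻¹ * x) →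
      ∀ x y : Matrix (Fin N) (Fin N) ℂ,
        r u w x * r u v y - r u v (r v w x * y) - r u w (x * r w v y) = 0 := by
  intro r hr x y
  have r_eq_mul : ∀ b c z, r b c z = a.yangBaxterR b c * z := fun b c z => by
    rw [hr, Matrix.yangBaxterR, add_mul, smul_mul_assoc, one_mul]
  simp only [r_eq_mul]
  calc _ = a.yangBaxterR u w * x * ((a.yangBaxterR u v - a.yangBaxterR w v) * y)
          - a.yangBaxterR u v * a.yangBaxterR v w * x * y := by noncomm_ring
    _ = 0 := by
      rw [Matrix.yangBaxterR_sub_yangBaxterR, a.yangBaxterR_mul_yangBaxterR huv huw hvw hv hw]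
      simp only [smul_mul_assoc, mul_smul_comm, one_mul, mul_assoc, sub_self]

/-- For `A = Mat_N(ℂ)` and `a ∈ A`, the operator `r(u,v)x = (u−v)⁻¹ x + (v+a)⁻¹ x`
satisfies the associative Yang–Baxter equation at pairwise distinct parameters where
`u+a`, `v+a`, `w+a` are invertible. -/
theorem stmt9 {N : ℕ} (a : Matrix (Fin N) (Fin N) ℂ) (u v w : ℂ)
    (huv : u ≠ v) (huw : u ≠ w) (hvw : v ≠ w)
    (hu : IsUnit (u • (1 : Matrix (Fin N) (Fin N) ℂ) + a))
    (hv : IsUnit (v • (1 : Matrix (Fin N) (Fin N) ℂ) + a))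
    (hw : IsUnit (w • (1 : Matrix (Fin N) (Fin N) ℂ) + a)) :
    ∀ r : ℂ → ℂ → Matrix (Fin N) (Fin N) ℂ → Matrix (Fin N) (Fin N) ℂ,
      (∀ b c x, r b c x = (b - c)⁻¹ • x + (c • (1 : Matrix (Fin N) (Fin N) ℂ) + a)⁻¹ * x) →
      ∀ x y : Matrix (Fin N) (Fin N) ℂ,
        r u w x * r u v y - r u v (r v w x * y) - r u w (x * r w v y) = 0 :=
  stmt9_general a u v w huv huw hvw hv hw
end

section
/- Fix k ≥ 2 and indices in ℤ/kℤ. Let U be the unital associative ℂ-algebra generated by e_1,...,e_k, f_1,...,f_k with relations e_i e_j = δ_{ij} e_i, f_i f_j = δ_{ij} f_i, e_1 + ... + e_k = 1, f_1 + ... + f_k = 1, and f_i e_j = 0 whenever j − i ∉ {0,1} (mod k). Fix t ∈ ℂ with t^k ≠ 1. Then there is a representation of U on V = ℂ^k defined as follows: let w_1,...,w_k be the standard basis, set v_i = w_i − t w_{i−1} (indices mod k), let e_i act as the projection onto ℂv_i along the span of the other v_j, and f_i act as the projection onto ℂw_i along the other w_j. With this action all the defining relations of U hold; in particular f_i e_j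 = 0 for j − i ∉ {0,1} mod k. -/
/-!
The `e_i` and the `f_i` are the coordinate projections of two bases of `ℂ^k`, the basis `v` and
the standard basis `w`; the projections attached to any basis are orthogonal idempotents summing
to the identity. The product `f_i e_j` vanishes because `v_j` has `w`-coordinates only at `j` and
`j - 1`. Finally `v` spans `ℂ^k`: unrolling `w_i = v_i + t w_{i-1}` once around the cycle gives
`(1 - t^k) w_i ∈ span v`.
-/

open Module Submodule

namespace Module.Basis

variable {ι κ R M : Type*} [CommSemiring R] [AddCommMonoid M] [Module R M]

noncomputable def coordProj (b : Basis ι R M) (i : ι) : M →ₗ[R] M :=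
  (b.coord i).smulRight (b i)

@[simp]
lemma coordProj_apply (b : Basis ι R M) (i : ι) (x : M) :
    b.coordProj i x = b.coord i x • b i := rfl

lemma coordProj_apply_self [DecidableEq ι] (b : Basis ι R M) (i j : ι) :
    b.coordProj i (b j) = if i = j then b i else 0 := by
  by_cases h : i = j <;> simp [h]

lemma coordProj_comp_coordProj [DecidableEq ι] (b : Basis ι R M) (i j : ι) :
    b.coordProj i ∘ₗ b.coordProj j = if i = j then b.coordProj i else 0 := by
  ext x
  rw [LinearMap.comp_apply, coordProj_apply b j, map_smul, coordProj_apply_self]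
  split_ifs with h
  · subst h; simp
  · simp

lemma sum_coordProj [Fintype ι] (b : Basis ι R M) : ∑ i, b.coordProj i = LinearMap.id := by
  ext x
  simp only [LinearMap.sum_apply, coordProj_apply, coord_apply,
    LinearMap.id_apply, b.sum_repr]

lemma coordProj_comp_coordProj_eq_zero (b : Basis ι R M) (b' : Basis κ R M) {i : ι} {j : κ}
    (h : b.coord i (b' j) = 0) : b.coordProj i ∘ₗ b'.coordProj j = 0 := by
  ext x
  simp [h]

end Module.Basis

section CyclicDifferences

variable {K M : Type*} [Field K] [AddCommGroup M] [Module K M] {n : ℕ}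

lemma sub_pow_smul_mem_span_cyclicDifferences (t : K) (w : ZMod n → M) (i : ZMod n) (m : ℕ) :
    w i - t ^ m • w (i - m) ∈ span K (Set.range fun j => w j - t • w (j - 1)) := by
  induction m with
  | zero => simp
  | succ m ih =>
    have hstep : w (i - m) - t • w (i - m - 1) ∈ span K (Set.range fun j => w j - t • w (j - 1)) :=
      subset_span ⟨i - m, rfl⟩
    convert add_mem ih (smul_mem _ (t ^ m) hstep) using 1
    push_cast
    rw [smul_sub, smul_smul, ← pow_succ, sub_sub]
    abel

lemma mem_span_cyclicDifferences {t : K} (ht : t ^ n ≠ 1) (w : ZMod n → M) (i : ZMod n) :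
    w i ∈ span K (Set.range fun j => w j - t • w (j - 1)) := by
  have hmem := sub_pow_smul_mem_span_cyclicDifferences t w i n
  rw [ZMod.natCast_self, sub_zero] at hmem
  have hmem' : (1 - t ^ n) • w i ∈ span K (Set.range fun j => w j - t • w (j - 1)) := by
    rwa [sub_smul, one_smul]
  exact (smul_mem_iff _ (sub_ne_zero.mpr ht.symm)).mp hmem'

noncomputable def cyclicDifferenceBasis [NeZero n] {t : K} (ht : t ^ n ≠ 1) :
    Basis (ZMod n) K (ZMod n → K) :=
  basisOfTopLeSpanOfCardEqFinrank (fun i => Pi.single i 1 - t • Pi.single (i - 1) 1)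
    (by
      rw [← (Pi.basisFun K (ZMod n)).span_eq, span_le]
      rintro _ ⟨i, rfl⟩
      simpa using mem_span_cyclicDifferences ht (Pi.basisFun K (ZMod n)) i)
    (by simp)

@[simp]
lemma coe_cyclicDifferenceBasis [NeZero n] {t : K} (ht : t ^ n ≠ 1) :
    ⇑(cyclicDifferenceBasis ht) = fun i => Pi.single i 1 - t • Pi.single (i - 1) 1 :=
  coe_basisOfTopLeSpanOfCardEqFinrank _ _ _

end CyclicDifferences

theorem stmt13_general (k : ℕ) [NeZero k] (t : ℂ) (ht : t ^ k ≠ 1) :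
    ∀ w v : ZMod k → (ZMod k → ℂ),
      (∀ i, w i = Pi.single i 1) →
      (∀ i, v i = w i - t • w (i - 1)) →
      ∃ e f : ZMod k → ((ZMod k → ℂ) →ₗ[ℂ] (ZMod k → ℂ)),
        (∀ i j, e i (v j) = if i = j then v i else 0) ∧
        (∀ i j, f i (w j) = if i = j then w i else 0) ∧
        (∀ i j, (e i).comp (e j) = if i = j then e i else 0) ∧
        (∀ i j, (f i).comp (f j) = if i = j then f i else 0) ∧
        (∑ i, e i) = LinearMap.id ∧
        (∑ i, f i) = LinearMap.id ∧
        (∀ i j, j - i ≠ 0 → j - i ≠ 1 → (f i).comp (e j) = 0) := by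
  intro w v hw hv
  let b := cyclicDifferenceBasis ht
  let b₀ := Pi.basisFun ℂ (ZMod k)
  obtain rfl : w = b₀ := funext fun i => by simp [b₀, hw]
  obtain rfl : v = b := funext fun i => by simp [b, b₀, hv]
  refine ⟨b.coordProj, b₀.coordProj, b.coordProj_apply_self, b₀.coordProj_apply_self,
    b.coordProj_comp_coordProj, b₀.coordProj_comp_coordProj, b.sum_coordProj, b₀.sum_coordProj,
    fun i j h₀ h₁ => b₀.coordProj_comp_coordProj_eq_zero b ?_⟩
  have hij : i ≠ j := fun h => h₀ (by rw [h, sub_self])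
  have hij' : i ≠ j - 1 := fun h => h₁ (by rw [h, sub_sub_cancel])
  simp [b, b₀, hij, hij']

/-- The Ã_{2k−1} M-algebra has a representation on `V = ℂ^k`: with `w_i` the standard
basis, `v_i = w_i − t w_{i−1}` (indices mod k, `t^k ≠ 1`), `e_i` the projection onto
`ℂv_i` along the other `v_j`, `f_i` the projection onto `ℂw_i` along the other `w_j`,
all defining relations hold. -/
theorem stmt13 (k : ℕ) [NeZero k] (hk : 2 ≤ k) (t : ℂ) (ht : t ^ k ≠ 1) :
    ∀ w v : ZMod k → (ZMod k → ℂ),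
      (∀ i, w i = Pi.single i 1) →
      (∀ i, v i = w i - t • w (i - 1)) →
      ∃ e f : ZMod k → ((ZMod k → ℂ) →ₗ[ℂ] (ZMod k → ℂ)),
        (∀ i j, e i (v j) = if i = j then v i else 0) ∧
        (∀ i j, f i (w j) = if i = j then w i else 0) ∧
        (∀ i j, (e i).comp (e j) = if i = j then e i else 0) ∧
        (∀ i j, (f i).comp (f j) = if i = j then f i else 0) ∧
        (∑ i, e i) = LinearMap.id ∧
        (∑ i, f i) = LinearMap.id ∧
        (∀ i j, j - i ≠ 0 → j - i ≠ 1 → (f i).comp (e j) = 0) :=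
  stmt13_general k t ht
end

section
/- In the setting of the representation of the Ã_{2k−1} M-algebra on V = ℂ^k (with bases w_i and v_i = w_i − t w_{i−1}, e_i projection onto ℂv_i along the other v's, f_i projection onto ℂw_i along the other w's, t^k ≠ 1), define R(x) = Σ_{1 ≤ i ≤ j ≤ k−1} e_i x f_j + f_k e_k x for x ∈ End(V). Then the element K := R(1) = Σ_{1 ≤ i ≤ j ≤ k−1} e_i f_j + f_k e_k acts on V as scalar multiplication by 1/(1 − t^k). -/
/-!
The basis change `v i = w i - t • w (i - 1)` telescopes:
`∑_{r<n} t^r • v (m - r) = w m - t^n • w (m - n)`. Over `ZMod k` the case `n = k` inverts it,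
`(1 - t^k) • w m = ∑_{r<k} t^r • v (m - r)`, so
`e i (w m) = (1 - t^k)⁻¹ • t^((m - i).val) • v i`.
On `w M` (`M < k`) the double sum keeps only `j = M`, and telescoping again gives
`(1 - t^k)⁻¹ • ∑_{1 ≤ i ≤ M} t^(M - i) • v i = (1 - t^k)⁻¹ • (w M - t^M • w 0)`.
The corner term supplies the missing `(1 - t^k)⁻¹ • t^M • w 0`, since `f 0 (v 0) = w 0`
once `-1 ≠ 0` in `ZMod k`.
-/

open Finset

namespace CyclicBasis

variable {R V ι : Type*} [Semiring R] [AddCommGroup V] [Module R V] [AddCommGroupWithOne ι]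
  {t : R} {w v : ι → V}

theorem sum_range_pow_smul_eq_sub (hv : ∀ i, v i = w i - t • w (i - 1)) (m : ι) (n : ℕ) :
    ∑ r ∈ range n, t ^ r • v (m - r) = w m - t ^ n • w (m - n) := by
  induction n with
  | zero => simp
  | succ n ih =>
    rw [sum_range_succ, ih, hv, smul_sub, smul_smul, ← pow_succ, Nat.cast_succ, sub_sub]
    abel

theorem sum_Icc_pow_smul_eq_sub (hv : ∀ i, v i = w i - t • w (i - 1)) (M : ℕ) :
    ∑ i ∈ Icc 1 M, t ^ (M - i) • v i = w M - t ^ M • w 0 := by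
  have reflect := sum_Ico_reflect (fun i ↦ t ^ (M - i) • v i) 0 (Nat.le_succ M)
  rw [Nat.add_sub_cancel_left, Nat.sub_zero, Ico_add_one_right_eq_Icc] at reflect
  rw [← reflect, ← range_eq_Ico, ← sub_self (M : ι), ← sum_range_pow_smul_eq_sub hv]
  refine sum_congr rfl fun r hr ↦ ?_
  have hrM : r ≤ M := (mem_range.mp hr).le
  rw [Nat.sub_sub_self hrM, Nat.cast_sub hrM]

theorem f_apply_v_self [DecidableEq ι] [NeZero (1 : ι)] {f : ι → V →ₗ[R] V}
    (hv : ∀ i, v i = w i - t • w (i - 1))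
    (hf : ∀ i j, f i (w j) = if i = j then w i else 0) (i : ι) :
    f i (v i) = w i := by
  rw [hv, map_sub, map_smul, hf, hf, if_pos rfl,
    if_neg fun h ↦ one_ne_zero (sub_eq_self.mp h.symm), smul_zero, sub_zero]

end CyclicBasis

theorem ZMod.natCast_eq_iff_eq_val_of_lt {k r : ℕ} [NeZero k] (hr : r < k) (a : ZMod k) :
    (r : ZMod k) = a ↔ r = a.val := by
  constructor
  · rintro rfl
    exact (ZMod.val_cast_of_lt hr).symm
  · rintro rfl
    exact a.natCast_zmod_val

namespace CyclicBasis

variable {𝕜 V : Type*} [Field 𝕜] [AddCommGroup V] [Module 𝕜 V] {k : ℕ}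
  {t : 𝕜} {w v : ZMod k → V} {e f : ZMod k → V →ₗ[𝕜] V}

theorem sum_range_pow_smul_eq_one_sub_pow_smul (hv : ∀ i, v i = w i - t • w (i - 1))
    (m : ZMod k) : ∑ r ∈ range k, t ^ r • v (m - r) = (1 - t ^ k) • w m := by
  rw [sum_range_pow_smul_eq_sub hv, ZMod.natCast_self, sub_zero, sub_smul, one_smul]

theorem e_apply_w [NeZero k] (hv : ∀ i, v i = w i - t • w (i - 1))
    (he : ∀ i j, e i (v j) = if i = j then v i else 0) (ht : t ^ k ≠ 1) (i m : ZMod k) :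
    e i (w m) = (1 - t ^ k)⁻¹ • t ^ (m - i).val • v i := by
  rw [eq_inv_smul_iff₀ (sub_ne_zero.mpr ht.symm), ← map_smul,
    ← sum_range_pow_smul_eq_one_sub_pow_smul hv, map_sum]
  have hterm : ∀ r ∈ range k,
      e i (t ^ r • v (m - r)) = if r = (m - i).val then t ^ r • v i else 0 := by
    intro r hr
    have hcond : i = m - r ↔ r = (m - i).val := by
      rw [← ZMod.natCast_eq_iff_eq_val_of_lt (mem_range.mp hr), eq_sub_iff_add_eq, add_comm,
        ← eq_sub_iff_add_eq, eq_comm]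
    simp only [map_smul, he, hcond, smul_ite, smul_zero]
  rw [sum_congr rfl hterm, sum_ite_eq', if_pos (mem_range.mpr (ZMod.val_lt _))]

theorem sum_Icc_f_apply_w [NeZero k] (hf : ∀ i j, f i (w j) = if i = j then w i else 0)
    {M : ℕ} (hM : M < k) (i : ℕ) :
    ∑ j ∈ Icc i (k - 1), f j (w M) = if i ≤ M then w M else 0 := by
  have hterm : ∀ j ∈ Icc i (k - 1), f j (w M) = if j = M then w M else 0 := by
    intro j hj
    have hjk : j < k := by grind
    simp only [hf, ZMod.natCast_eq_iff_eq_val_of_lt hjk, ZMod.val_cast_of_lt hM]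
    split_ifs with h <;> simp [h]
  rw [sum_congr rfl hterm, sum_ite_eq']
  congr 1
  grind

theorem sum_Icc_e_comp_f_apply_w [NeZero k] (hv : ∀ i, v i = w i - t • w (i - 1))
    (he : ∀ i j, e i (v j) = if i = j then v i else 0)
    (hf : ∀ i j, f i (w j) = if i = j then w i else 0) (ht : t ^ k ≠ 1)
    {M : ℕ} (hM : M < k) :
    (∑ i ∈ Icc 1 (k - 1), ∑ j ∈ Icc i (k - 1),
        (e (i : ZMod k)).comp (f (j : ZMod k))) (w M) =
      (1 - t ^ k)⁻¹ • (w M - t ^ M • w 0) := by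
  simp only [LinearMap.sum_apply, LinearMap.comp_apply, ← map_sum, sum_Icc_f_apply_w hf hM,
    apply_ite (e _), map_zero]
  have hfilter : {i ∈ Icc 1 (k - 1) | i ≤ M} = Icc 1 M := by
    ext
    simp only [mem_filter, mem_Icc]
    omega
  have hterm : ∀ i ∈ Icc 1 M, e i (w M) = (1 - t ^ k)⁻¹ • t ^ (M - i) • v i := by
    intro i hi
    have hiM : i ≤ M := (mem_Icc.mp hi).2
    rw [e_apply_w hv he ht, ← Nat.cast_sub hiM, ZMod.val_cast_of_lt (by omega)]
  rw [← sum_filter, hfilter, sum_congr rfl hterm, ← smul_sum, sum_Icc_pow_smul_eq_sub hv]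

end CyclicBasis

/-- In the Ã_{2k−1} representation on `ℂ^k`, the element
`K = Σ_{1 ≤ i ≤ j ≤ k−1} e_i f_j + f_k e_k` acts as the scalar `1/(1 − t^k)`. -/
theorem stmt14 (k : ℕ) [NeZero k] (hk : 2 ≤ k) (t : ℂ) (ht : t ^ k ≠ 1)
    (w v : ZMod k → (ZMod k → ℂ))
    (hw : ∀ i, w i = Pi.single i 1)
    (hv : ∀ i, v i = w i - t • w (i - 1))
    (e f : ZMod k → ((ZMod k → ℂ) →ₗ[ℂ] (ZMod k → ℂ)))
    (he : ∀ i j, e i (v j) = if i = j then v i else 0)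
    (hf : ∀ i j, f i (w j) = if i = j then w i else 0) :
    ((∑ i ∈ Finset.Icc 1 (k - 1), ∑ j ∈ Finset.Icc i (k - 1),
        (e (i : ZMod k)).comp (f (j : ZMod k)))
      + (f (k : ZMod k)).comp (e (k : ZMod k)))
      = (1 - t ^ k)⁻¹ • LinearMap.id := by
  have : Fact (1 < k) := ⟨hk⟩
  refine (Pi.basisFun ℂ (ZMod k)).ext fun m ↦ ?_
  obtain ⟨M, hM, rfl⟩ : ∃ M < k, (M : ZMod k) = m := ⟨m.val, m.val_lt, m.natCast_zmod_val⟩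
  have hsum := CyclicBasis.sum_Icc_e_comp_f_apply_w hv he hf ht hM
  have hcorner : f 0 (e 0 (w M)) = (1 - t ^ k)⁻¹ • t ^ M • w 0 := by
    rw [CyclicBasis.e_apply_w hv he ht, sub_zero, ZMod.val_cast_of_lt hM, map_smul, map_smul,
      CyclicBasis.f_apply_v_self hv hf]
  rw [Pi.basisFun_apply, ← hw, LinearMap.add_apply, hsum, LinearMap.comp_apply,
    ZMod.natCast_self, hcorner, ← smul_add, sub_add_cancel, LinearMap.smul_apply,
    LinearMap.id_apply]
end

section
/- Fix k ≥ 2 and t ∈ ℂ with t^k ≠ 1, and consider the representation of the Ã_{2k−1} M-algebra on V = ℂ^k as above (e_i, f_i projections associated to the bases v_i = w_i − t w_{i−1} and w_i). Let R ∈ End(End(V)) be given by R(x) = Σ_{1 ≤ i ≤ j ≤ k−1} e_i x f_j + f_k e_k x, and let K = R(1), which acts as the scalar μ = 1/(1 − t^k). Then R satisfies the cubic identity μ R(x) − (μ + 1) R²(x) + R³(x) = 0 for all x ∈ End(V). -/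
/-!
Split `R = A + L`, where `A x = ∑ e_i x f_j` over the upper triangle `1 ≤ i ≤ j ≤ k - 1` and `L`
is left multiplication by `P = f_0 e_0` (indices live in `ZMod k`, so `f_k e_k = f_0 e_0`).
Telescoping gives `(1 - t^k) w_i = ∑_{m < k} t^m v_{i-m}`, so the `v_i` span and `e_i w_i = μ v_i`.
Hence the `e_i`, like the `f_i`, are orthogonal idempotents, which makes `A² = A` and `L A = 0`;
and since `f_i v_i = w_i` for `k ≥ 2`, also `P² = μ P`, i.e. `L² = μ L`. In any algebra,
`a² = a`, `l a = 0` and `l² = μ l` force `μ (a + l) - (μ + 1) (a + l)² + (a + l)³ = 0`.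
-/

open Finset

theorem smul_add_sub_smul_sq_add_pow_three_eq_zero {S α : Type*} [CommRing S] [Ring α]
    [Algebra S α] {a l : α} {μ : S} (ha : a * a = a) (hla : l * a = 0) (hl : l * l = μ • l) :
    μ • (a + l) - (μ + 1) • (a + l) ^ 2 + (a + l) ^ 3 = 0 := by
  have hsq : (a + l) ^ 2 = a + a * l + μ • l := by
    rw [sq, add_mul, mul_add, mul_add, ha, hla, hl, zero_add]
  have hcube : (a + l) ^ 3 = a + a * l + μ • (a * l) + (μ * μ) • l := by
    rw [pow_succ, hsq]
    simp only [add_mul, mul_add, ha, hla, hl, mul_assoc, smul_mul_assoc, mul_smul_comm, mul_zero,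
      smul_zero, smul_smul]
    abel
  rw [hsq, hcube]
  module

theorem Module.End.mul_eq_ite_of_apply_eq_ite {R M ι : Type*} [Semiring R] [AddCommMonoid M]
    [Module R M] [DecidableEq ι] {b : ι → M} (hb : Submodule.span R (Set.range b) = ⊤)
    {p : ι → Module.End R M} (hp : ∀ i j, p i (b j) = if i = j then b i else 0) (i j : ι) :
    p i * p j = if i = j then p i else 0 := by
  refine LinearMap.ext_on_range hb fun l => ?_
  rw [Module.End.mul_apply, hp j l]
  split_ifs <;> simp_all

section Sandwich

variable {R M ι : Type*} [CommRing R] [AddCommGroup M] [Module R M]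

def sandwichSum (e f : ι → Module.End R M) (s : Finset (ι × ι)) :
    Module.End R (Module.End R M) :=
  ∑ p ∈ s, LinearMap.mulLeft R (e p.1) * LinearMap.mulRight R (f p.2)

theorem sandwichSum_apply (e f : ι → Module.End R M) (s : Finset (ι × ι)) (x : Module.End R M) :
    sandwichSum e f s x = ∑ p ∈ s, e p.1 * x * f p.2 := by
  simp [sandwichSum, LinearMap.sum_apply, mul_assoc]

variable {e f : ι → Module.End R M}

theorem sandwichSum_mul_self [DecidableEq ι] (he : ∀ i j, e i * e j = if i = j then e i else 0)
    (hf : ∀ i j, f i * f j = if i = j then f i else 0) (s : Finset (ι × ι)) :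
    sandwichSum e f s * sandwichSum e f s = sandwichSum e f s := by
  ext1 x
  have hterm : ∀ p q : ι × ι, e p.1 * (e q.1 * x * f q.2) * f p.2 =
      if q = p then e p.1 * x * f p.2 else 0 := by
    intro p q
    have hassoc : e p.1 * (e q.1 * x * f q.2) * f p.2 = (e p.1 * e q.1) * x * (f q.2 * f p.2) := by
      simp only [mul_assoc]
    rw [hassoc, he, hf]
    split_ifs <;> simp_all [Prod.ext_iff]
  simp only [Module.End.mul_apply, sandwichSum_apply, Finset.mul_sum, Finset.sum_mul, hterm,
    Finset.sum_ite_eq']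
  exact sum_congr rfl fun p hp => if_pos hp

theorem mulLeft_mul_sandwichSum_eq_zero {a : Module.End R M} {s : Finset (ι × ι)}
    (ha : ∀ p ∈ s, a * e p.1 = 0) :
    LinearMap.mulLeft R a * sandwichSum e f s = 0 := by
  ext1 x
  simp only [Module.End.mul_apply, LinearMap.mulLeft_apply, sandwichSum_apply, Finset.mul_sum,
    LinearMap.zero_apply]
  exact sum_eq_zero fun p hp => by rw [← mul_assoc, ← mul_assoc, ha p hp, zero_mul, zero_mul]

end Sandwich

section Cyclic

variable {K M : Type*} [Field K] [AddCommGroup M] [Module K M] {k : ℕ} {t : K}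
  {w v : ZMod k → M} {e f : ZMod k → Module.End K M}

theorem one_sub_pow_smul_eq_sum (hv : ∀ i, v i = w i - t • w (i - 1)) (i : ZMod k) :
    (1 - t ^ k) • w i = ∑ m ∈ range k, t ^ m • v (i - m) := by
  have hstep : ∀ m : ℕ,
      t ^ m • v (i - m) = t ^ m • w (i - m) - t ^ (m + 1) • w (i - (m + 1 : ℕ)) := by
    intro m
    rw [hv, smul_sub, smul_smul, ← pow_succ]
    congr 3
    push_cast
    ring
  rw [sum_congr rfl fun m _ => hstep m, sum_range_sub' (fun m => t ^ m • w (i - m)) k]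
  simp [sub_smul]

theorem mem_span_range_of_eq_sub_smul (ht : t ^ k ≠ 1) (hv : ∀ i, v i = w i - t • w (i - 1))
    (i : ZMod k) : w i ∈ Submodule.span K (Set.range v) := by
  have hunit : (1 - t ^ k) ≠ 0 := sub_ne_zero.2 ht.symm
  rw [← inv_smul_smul₀ hunit (w i), one_sub_pow_smul_eq_sum hv]
  exact Submodule.smul_mem _ _ (Submodule.sum_mem _ fun m _ =>
    Submodule.smul_mem _ _ (Submodule.subset_span ⟨_, rfl⟩))

theorem apply_eq_inv_one_sub_pow_smul (ht : t ^ k ≠ 1) (hv : ∀ i, v i = w i - t • w (i - 1))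
    (he : ∀ i j, e i (v j) = if i = j then v i else 0) (i : ZMod k) :
    e i (w i) = (1 - t ^ k)⁻¹ • v i := by
  have hunit : (1 - t ^ k) ≠ 0 := sub_ne_zero.2 ht.symm
  have hk : 0 < k := Nat.pos_of_ne_zero fun hk => ht (hk ▸ pow_zero t)
  have hterm : ∀ m ∈ range k, e i (t ^ m • v (i - m)) = if m = 0 then v i else 0 := by
    intro m hm
    have hself : i = i - m ↔ m = 0 := by
      rw [eq_comm, sub_eq_self, ZMod.natCast_eq_zero_iff]
      exact ⟨fun h => Nat.eq_zero_of_dvd_of_lt h (mem_range.1 hm), fun h => h ▸ dvd_zero k⟩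
    by_cases h : m = 0 <;> simp [he, hself, h]
  rw [eq_inv_smul_iff₀ hunit, ← map_smul, one_sub_pow_smul_eq_sum hv, map_sum,
    sum_congr rfl hterm, sum_ite_eq', if_pos (mem_range.2 hk)]

theorem span_range_eq_top_of_eq_sub_smul (ht : t ^ k ≠ 1) (hv : ∀ i, v i = w i - t • w (i - 1))
    (hw : Submodule.span K (Set.range w) = ⊤) : Submodule.span K (Set.range v) = ⊤ :=
  eq_top_iff.2 <| hw ▸ Submodule.span_le.2 <| Set.range_subset_iff.2 <|
    mem_span_range_of_eq_sub_smul ht hv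

theorem apply_eq_of_ne_one (hk : k ≠ 1) (hv : ∀ i, v i = w i - t • w (i - 1))
    (hf : ∀ i j, f i (w j) = if i = j then w i else 0) (i : ZMod k) : f i (v i) = w i := by
  have hi : i ≠ i - 1 := by
    rw [ne_eq, eq_comm, sub_eq_self, ZMod.one_eq_zero_iff]
    exact hk
  rw [hv, map_sub, map_smul, hf, hf, if_pos rfl, if_neg hi, smul_zero, sub_zero]

theorem mul_self_eq_inv_one_sub_pow_smul (hk : k ≠ 1) (ht : t ^ k ≠ 1)
    (hv : ∀ i, v i = w i - t • w (i - 1)) (hspan : Submodule.span K (Set.range v) = ⊤)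
    (he : ∀ i j, e i (v j) = if i = j then v i else 0)
    (hf : ∀ i j, f i (w j) = if i = j then w i else 0) (i : ZMod k) :
    f i * e i * (f i * e i) = (1 - t ^ k)⁻¹ • (f i * e i) := by
  refine LinearMap.ext_on_range hspan fun j => ?_
  by_cases hij : i = j
  · subst hij
    simp [he, apply_eq_inv_one_sub_pow_smul ht hv he, apply_eq_of_ne_one hk hv hf]
  · simp [he, hij]

end Cyclic

def upperTriangle (k : ℕ) : Finset (ZMod k × ZMod k) :=
  ((Icc 1 (k - 1)).sigma fun i => Icc i (k - 1)).image fun p => ((p.1 : ZMod k), (p.2 : ZMod k))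

theorem sum_upperTriangle {X : Type*} [AddCommMonoid X] (k : ℕ) (g : ZMod k → ZMod k → X) :
    ∑ p ∈ upperTriangle k, g p.1 p.2 = ∑ i ∈ Icc 1 (k - 1), ∑ j ∈ Icc i (k - 1), g i j := by
  have hcast : ∀ a b : ℕ, a < k → b < k → (a : ZMod k) = b → a = b := fun a b ha hb h => by
    rwa [ZMod.natCast_eq_natCast_iff', Nat.mod_eq_of_lt ha, Nat.mod_eq_of_lt hb] at h
  rw [upperTriangle, sum_image, sum_sigma]
  rintro ⟨a, b⟩ hab ⟨c, d⟩ hcd h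
  simp only [coe_sigma, Set.mem_sigma_iff, coe_Icc, Set.mem_Icc, Prod.mk.injEq] at hab hcd h
  obtain rfl := hcast a c (by omega) (by omega) h.1
  obtain rfl := hcast b d (by omega) (by omega) h.2
  rfl

theorem fst_ne_zero_of_mem_upperTriangle {k : ℕ} {p : ZMod k × ZMod k}
    (hp : p ∈ upperTriangle k) : p.1 ≠ 0 := by
  simp only [upperTriangle, mem_image, mem_sigma, mem_Icc] at hp
  obtain ⟨⟨a, b⟩, ⟨⟨ha1, hak⟩, -⟩, rfl⟩ := hp
  rw [ne_eq, ZMod.natCast_eq_zero_iff]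
  exact fun hdvd => by have := Nat.eq_zero_of_dvd_of_lt hdvd (by omega); omega

/-- In the Ã_{2k−1} representation on `ℂ^k`, the operator
`R(x) = Σ_{1 ≤ i ≤ j ≤ k−1} e_i x f_j + f_k e_k x` satisfies the cubic identity
`μ R(x) − (μ+1) R²(x) + R³(x) = 0` with `μ = 1/(1 − t^k)`. -/
theorem stmt15 (k : ℕ) [NeZero k] (hk : 2 ≤ k) (t : ℂ) (ht : t ^ k ≠ 1)
    (w v : ZMod k → (ZMod k → ℂ))
    (hw : ∀ i, w i = Pi.single i 1)
    (hv : ∀ i, v i = w i - t • w (i - 1))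
    (e f : ZMod k → ((ZMod k → ℂ) →ₗ[ℂ] (ZMod k → ℂ)))
    (he : ∀ i j, e i (v j) = if i = j then v i else 0)
    (hf : ∀ i j, f i (w j) = if i = j then w i else 0) :
    ∀ R : ((ZMod k → ℂ) →ₗ[ℂ] (ZMod k → ℂ)) → ((ZMod k → ℂ) →ₗ[ℂ] (ZMod k → ℂ)),
      (∀ x, R x = (∑ i ∈ Finset.Icc 1 (k - 1), ∑ j ∈ Finset.Icc i (k - 1),
          (e (i : ZMod k)).comp (x.comp (f (j : ZMod k))))
        + ((f (k : ZMod k)).comp (e (k : ZMod k))).comp x) →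
      ∀ x, (1 - t ^ k)⁻¹ • R x - ((1 - t ^ k)⁻¹ + 1) • R (R x) + R (R (R x)) = 0 := by
  intro R hR x
  have hw_span : Submodule.span ℂ (Set.range w) = ⊤ := by
    rw [show w = Pi.basisFun ℂ (ZMod k) from funext fun i => by rw [hw, Pi.basisFun_apply]]
    exact (Pi.basisFun ℂ (ZMod k)).span_eq
  have hv_span := span_range_eq_top_of_eq_sub_smul ht hv hw_span
  set A : Module.End ℂ (Module.End ℂ (ZMod k → ℂ)) := sandwichSum e f (upperTriangle k)
  set L : Module.End ℂ (Module.End ℂ (ZMod k → ℂ)) := LinearMap.mulLeft ℂ (f 0 * e 0)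
  have hRA : ∀ y, R y = (A + L) y := fun y => by
    rw [hR, ZMod.natCast_self, LinearMap.add_apply, sandwichSum_apply,
      sum_upperTriangle k fun i j => e i * y * f j]
    simp only [mul_assoc]
    rfl
  have hAA : A * A = A := sandwichSum_mul_self (Module.End.mul_eq_ite_of_apply_eq_ite hv_span he)
    (Module.End.mul_eq_ite_of_apply_eq_ite hw_span hf) _
  have hLA : L * A = 0 := mulLeft_mul_sandwichSum_eq_zero fun p hp => by
    rw [mul_assoc, Module.End.mul_eq_ite_of_apply_eq_ite hv_span he,
      if_neg (fst_ne_zero_of_mem_upperTriangle hp).symm, mul_zero]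
  have hLL : L * L = (1 - t ^ k)⁻¹ • L := by
    ext1 y
    simp only [L, Module.End.mul_apply, LinearMap.mulLeft_apply, LinearMap.smul_apply,
      ← mul_assoc, mul_self_eq_inv_one_sub_pow_smul (by omega) ht hv hv_span he hf, smul_mul_assoc]
  have hcubic := smul_add_sub_smul_sq_add_pow_three_eq_zero
    (α := Module.End ℂ (Module.End ℂ (ZMod k → ℂ))) hAA hLA hLL
  simpa [hRA, pow_succ] using LinearMap.congr_fun hcubic x
end
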